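/- Let F: ℝ → [0,1] be the cumulative distribution function of a probability measure ν on ℝ with finite first moment, and let F⁻¹(v) = inf{y ∈ ℝ : F(y) ≥ v} for v ∈ (0,1) be its generalized inverse. Among all atomic measures of the form ν̂_M = (1/M) Σ_{m=1}^M δ_{e_m}, the Wasserstein-1 distance W₁(ν, ν̂_M) = ∫ |F(x) − F_{ν̂_M}(x)| dx is minimized by choosing e_m = F⁻¹((2m−1)/(2M)) for 1 ≤ m ≤ M. -/

import Mathlib

/-!
For every `x`, the atom `F⁻¹((2m+1)/(2M))` lies below `x` iff `m + 1/2 ≤ M F(x)`, so the CDF of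
the quantile atoms at `x` is `round (M F(x)) / M`, a nearest point of `ℤ/M` to `F(x)`. Every
atomic CDF with `M` equal atoms takes its values in `ℤ/M`, so the quantile choice minimises the
integrand pointwise. Two such CDFs differ only on a bounded interval, hence the two integrands
differ by an integrable function, and the pointwise inequality passes to the integrals whether
or not they are finite.
-/

open MeasureTheory

/-- The CDF of the atomic measure `(1/M) Σ δ_{e m}`. -/
noncomputable def atomicCDF (M : ℕ) (e : Fin M → ℝ) (x : ℝ) : ℝ :=
  ((Finset.univ.filter (fun m : Fin M => e m ≤ x)).card : ℝ) / M

open Set Filter Topology ProbabilityTheory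

theorem StieltjesFunction.csInf_setOf_le_le_iff (f : StieltjesFunction ℝ) {q : ℝ}
    (hne : {y | q ≤ f y}.Nonempty) (hbdd : BddBelow {y | q ≤ f y}) (x : ℝ) :
    sInf {y | q ≤ f y} ≤ x ↔ q ≤ f x := by
  refine ⟨fun hx => ?_, fun hx => csInf_le hbdd hx⟩
  set s := sInf {y | q ≤ f y}
  have hs : q ≤ f s := by
    refine ge_of_tendsto ((f.right_continuous s).mono Ioi_subset_Ici_self).tendsto ?_
    filter_upwards [self_mem_nhdsWithin] with y hy
    obtain ⟨z, hz, hzy⟩ := exists_lt_of_csInf_lt hne hy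
    exact hz.trans (f.mono hzy.le)
  exact hs.trans (f.mono hx)

theorem ProbabilityTheory.csInf_setOf_le_cdf_le_iff (μ : Measure ℝ) [IsProbabilityMeasure μ]
    {q : ℝ} (hq0 : 0 < q) (hq1 : q < 1) (x : ℝ) :
    sInf {y | q ≤ cdf μ y} ≤ x ↔ q ≤ cdf μ x := by
  refine (cdf μ).csInf_setOf_le_le_iff
    ((tendsto_cdf_atTop μ).eventually (eventually_ge_nhds hq1)).exists ?_ x
  obtain ⟨y₀, hy₀⟩ := eventually_atBot.1 ((tendsto_cdf_atBot μ).eventually (eventually_lt_nhds hq0))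
  exact ⟨y₀, fun y hy => le_of_not_gt fun hlt => (hy₀ y hlt.le).not_ge hy⟩

open Finset in
theorem card_filter_add_half_le_eq_round {M : ℕ} {t : ℝ} (ht₀ : 0 ≤ t) (htM : t ≤ M) :
    (#{m : Fin M | (m : ℝ) + 1 / 2 ≤ t} : ℤ) = round t := by
  have hfloor : ⌊t + 1 / 2⌋₊ ≤ M :=
    Nat.lt_succ_iff.1 ((Nat.floor_lt (by positivity)).2 (by push_cast; linarith))
  have hfilter : univ.filter (fun m : Fin M => (m : ℝ) + 1 / 2 ≤ t) =
      univ.filter (fun m : Fin M => (m : ℕ) < ⌊t + 1 / 2⌋₊) := by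
    ext m
    rw [mem_filter_univ, mem_filter_univ, Nat.lt_iff_add_one_le,
      Nat.le_floor_iff (by positivity)]
    push_cast
    constructor <;> intro h <;> linarith
  rw [hfilter, Fin.card_filter_val_lt, min_eq_right hfloor,
    Int.natCast_floor_eq_floor (by positivity), round_eq]

theorem abs_sub_round_mul_div_le {M : ℝ} (hM : 0 < M) (p : ℝ) (j : ℤ) :
    |p - round (M * p) / M| ≤ |p - j / M| := by
  have hdiv : ∀ z : ℝ, p - z / M = (M * p - z) / M := fun z => by field_simp
  rw [hdiv, hdiv, abs_div, abs_div]
  exact div_le_div_of_nonneg_right (round_le _ _) (abs_nonneg M)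

theorem atomicCDF_eq_intCast_card_div (M : ℕ) (e : Fin M → ℝ) (x : ℝ) :
    atomicCDF M e x = (((Finset.univ.filter (fun m : Fin M => e m ≤ x)).card : ℤ) : ℝ) / M := by
  rw [atomicCDF, Int.cast_natCast]

theorem atomicCDF_quantiles (μ : Measure ℝ) [IsProbabilityMeasure μ] {M : ℕ} (hM : 0 < M)
    (x : ℝ) :
    atomicCDF M (fun m => sInf {y | (2 * (m : ℝ) + 1) / (2 * M) ≤ cdf μ y}) x =
      round (M * cdf μ x) / M := by
  have hM' : (0 : ℝ) < M := Nat.cast_pos.2 hM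
  have hfilter : Finset.univ.filter
        (fun m : Fin M => sInf {y | (2 * (m : ℝ) + 1) / (2 * M) ≤ cdf μ y} ≤ x) =
      Finset.univ.filter (fun m : Fin M => (m : ℝ) + 1 / 2 ≤ M * cdf μ x) := by
    refine Finset.filter_congr fun m _ => ?_
    have hm : (m : ℝ) + 1 ≤ M := by exact_mod_cast m.isLt
    rw [csInf_setOf_le_cdf_le_iff μ (by positivity) ((div_lt_one (by positivity)).2 (by linarith)),
      div_le_iff₀ (by positivity)]
    constructor <;> intro h <;> linarith
  rw [atomicCDF_eq_intCast_card_div, hfilter, card_filter_add_half_le_eq_round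
    (mul_nonneg hM'.le (cdf_nonneg μ x)) (mul_le_of_le_one_right hM'.le (cdf_le_one μ x))]

theorem abs_cdf_sub_atomicCDF_quantiles_le (μ : Measure ℝ) [IsProbabilityMeasure μ] {M : ℕ}
    (hM : 0 < M) (e : Fin M → ℝ) (x : ℝ) :
    |cdf μ x - atomicCDF M (fun m => sInf {y | (2 * (m : ℝ) + 1) / (2 * M) ≤ cdf μ y}) x| ≤
      |cdf μ x - atomicCDF M e x| := by
  rw [atomicCDF_quantiles μ hM, atomicCDF_eq_intCast_card_div]
  exact abs_sub_round_mul_div_le (Nat.cast_pos.2 hM) _ _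

theorem atomicCDF_eq_sum_indicator (M : ℕ) (e : Fin M → ℝ) (x : ℝ) :
    atomicCDF M e x = (∑ m, (Ici (e m)).indicator 1 x) / M := by
  simp only [atomicCDF, indicator_apply, mem_Ici, Pi.one_apply, Finset.sum_boole]

theorem integrable_indicator_Ici_sub_indicator_Ici (a b : ℝ) :
    Integrable ((Ici a).indicator 1 - (Ici b).indicator (1 : ℝ → ℝ)) := by
  wlog hab : a ≤ b generalizing a b
  · simpa only [neg_sub] using (this b a (le_of_not_ge hab)).neg
  rw [← indicator_sdiff (Ici_subset_Ici.2 hab), Ici_sdiff_Ici]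
  exact (integrableOn_const measure_Ico_lt_top.ne).integrable_indicator measurableSet_Ico

theorem integrable_atomicCDF_sub_atomicCDF (M : ℕ) (e e' : Fin M → ℝ) :
    Integrable (fun x => atomicCDF M e x - atomicCDF M e' x) := by
  simp_rw [atomicCDF_eq_sum_indicator, ← sub_div, ← Finset.sum_sub_distrib]
  exact (integrable_finsetSum _ fun m _ =>
    integrable_indicator_Ici_sub_indicator_Ici (e m) (e' m)).div_const _

theorem monotone_atomicCDF (M : ℕ) (e : Fin M → ℝ) : Monotone (atomicCDF M e) :=
  fun _ _ hxy => div_le_div_of_nonneg_right (Nat.cast_le.2 (Finset.card_le_card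
    (Finset.monotone_filter_right _ fun _ _ h => h.trans hxy))) (Nat.cast_nonneg M)

theorem integral_mono_of_integrable_sub {α : Type*} [MeasurableSpace α] {μ : Measure α}
    {f g : α → ℝ} (hfg : f ≤ g) (hint : Integrable (g - f) μ) : ∫ x, f x ∂μ ≤ ∫ x, g x ∂μ := by
  by_cases hg : Integrable g μ
  · exact integral_mono (by simpa using hg.sub hint) hg hfg
  · have hf : ¬Integrable f μ := fun hf => hg (by simpa using hf.add hint)
    rw [integral_undef hf, integral_undef hg]

theorem integrable_abs_sub_sub_abs_sub {α : Type*} [MeasurableSpace α] {μ : Measure α}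
    {f g g' : α → ℝ} (hf : AEStronglyMeasurable f μ) (hg : AEStronglyMeasurable g μ)
    (hg' : AEStronglyMeasurable g' μ) (hint : Integrable (fun x => g' x - g x) μ) :
    Integrable (fun x => |f x - g x| - |f x - g' x|) μ :=
  hint.mono ((hf.sub hg).norm.sub (hf.sub hg').norm) <| .of_forall fun x => by
    simpa only [Real.norm_eq_abs, sub_sub_sub_cancel_left] using
      abs_abs_sub_abs_le_abs_sub (f x - g x) (f x - g' x)

theorem optimal_quantization_general
    (ν : Measure ℝ) [IsProbabilityMeasure ν]
    (F : ℝ → ℝ) (hF : ∀ x, F x = (ν (Set.Iic x)).toReal)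
    (M : ℕ) (hM : 0 < M)
    (eopt : Fin M → ℝ)
    (heopt : ∀ m : Fin M,
      eopt m = sInf {y : ℝ | (2 * (m : ℝ) + 1) / (2 * M) ≤ F y}) :
    ∀ e : Fin M → ℝ,
      ∫ x, |F x - atomicCDF M eopt x| ≤ ∫ x, |F x - atomicCDF M e x| := by
  intro e
  obtain rfl : F = cdf ν := funext fun x => by rw [hF, cdf_eq_real, measureReal_def]
  obtain rfl := funext heopt
  refine integral_mono_of_integrable_sub (abs_cdf_sub_atomicCDF_quantiles_le ν hM e) ?_
  exact integrable_abs_sub_sub_abs_sub (cdf ν).mono.measurable.aestronglyMeasurable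
    (monotone_atomicCDF M e).measurable.aestronglyMeasurable
    (monotone_atomicCDF M _).measurable.aestronglyMeasurable
    (integrable_atomicCDF_sub_atomicCDF M _ e)

/-- Among atomic measures with `M` equal atoms, the L¹ distance between CDFs
(i.e. the Wasserstein-1 distance to `ν`) is minimized by placing the atoms at
the quantiles `F⁻¹((2m−1)/(2M))`. -/
theorem optimal_quantization
    (ν : Measure ℝ) [IsProbabilityMeasure ν]
    (hmom : Integrable (fun x : ℝ => |x|) ν)
    (F : ℝ → ℝ) (hF : ∀ x, F x = (ν (Set.Iic x)).toReal)
    (M : ℕ) (hM : 0 < M)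
    (eopt : Fin M → ℝ)
    (heopt : ∀ m : Fin M,
      eopt m = sInf {y : ℝ | (2 * (m : ℝ) + 1) / (2 * M) ≤ F y}) :
    ∀ e : Fin M → ℝ,
      ∫ x, |F x - atomicCDF M eopt x| ≤ ∫ x, |F x - atomicCDF M e x| :=
  optimal_quantization_general ν F hF M hM eopt heopt
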